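/- arXiv:2307.12277 — 2 statements merged into one kernel-verified Lean document; each statement's English description precedes it below -/
import Mathlib

section
/- Let a, b ∈ ℝ and r > 0. Define θ = arctan(b/a) if (a,b) ≠ (0,0) and θ = 0 otherwise. Then the maximum of |(a+ib) − (p+iq)| over all (p,q) ∈ ℝ² with p ≥ 0 and |p+iq| ≤ r equals max{ |a + i(b+r)|, |a + i(b−r)|, |a + ib − r·e^{iθ}| }. -/
/-!
On the half-disk `0 ≤ p`, `|p + iq| ≤ r`, the distance from `z = a + ib` is maximised as follows.
If `a < 0`, the triangle inequality gives `|z - w| ≤ |z| + r`, attained at `w = -r z / |z|`,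
which lies in the half-disk and equals `r e^{iθ}` for `θ = arctan (b / a)`. If `a ≥ 0`, then
`|z - w|² ≤ a² + b² + 2|b| r + r²` because `-2ap ≤ 0` and `|q| ≤ r`, so one of the endpoints
`w = ∓ i r` of the boundary diameter is farthest.
-/

open Real

namespace Complex

theorem norm_mul_exp_arctan_mul_I_of_re_neg {z : ℂ} (hz : z.re < 0) :
    (‖z‖ : ℂ) * exp (Real.arctan (z.im / z.re) * I) = -z := by
  have hre : z.re ≠ 0 := hz.ne
  have hnorm : ‖z‖ ≠ 0 := norm_ne_zero_iff.2 fun h => hre (by simp [h])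
  have hsqrt : √(1 + (z.im / z.re) ^ 2) = ‖z‖ / -z.re := by
    rw [norm_def, normSq_apply, ← Real.sqrt_sq (neg_nonneg.2 hz.le),
      ← Real.sqrt_div' _ (by positivity)]
    congr 1
    field_simp
  apply Complex.ext <;>
    simp only [mul_re, mul_im, ofReal_re, ofReal_im, exp_ofReal_mul_I_re, exp_ofReal_mul_I_im,
      Real.cos_arctan, Real.sin_arctan, hsqrt, neg_re, neg_im] <;>
    field_simp <;> ring

theorem norm_sub_le_norm_sub_mul_exp_arctan_mul_I {z w : ℂ} {r : ℝ} (hz : z.re < 0)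
    (hw : ‖w‖ ≤ r) : ‖z - w‖ ≤ ‖z - r * exp (Real.arctan (z.im / z.re) * I)‖ := by
  have hnorm : 0 < ‖z‖ := norm_pos_iff.2 fun h => hz.ne (by simp [h])
  have hr : 0 ≤ r := (norm_nonneg w).trans hw
  have hpolar :
      z - r * exp (Real.arctan (z.im / z.re) * I) = ((1 + r / ‖z‖ : ℝ) : ℂ) * z := by
    have hne : (‖z‖ : ℂ) ≠ 0 := by exact_mod_cast hnorm.ne'
    rw [← mul_div_cancel_left₀ (exp _) hne, norm_mul_exp_arctan_mul_I_of_re_neg hz]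
    push_cast
    field_simp
    ring
  calc ‖z - w‖ ≤ ‖z‖ + r := (norm_sub_le z w).trans (add_le_add_right hw _)
    _ = ‖z - r * exp (Real.arctan (z.im / z.re) * I)‖ := by
      rw [hpolar, norm_mul, norm_real, norm_of_nonneg (by positivity)]
      field_simp

theorem norm_sub_le_max_of_re_nonneg {z w : ℂ} {r : ℝ} (hz : 0 ≤ z.re) (hw : 0 ≤ w.re)
    (hwr : ‖w‖ ≤ r) : ‖z - w‖ ≤ max ‖z + r * I‖ ‖z - r * I‖ := by
  have hr : 0 ≤ r := (norm_nonneg w).trans hwr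
  have hw2 : w.re ^ 2 + w.im ^ 2 ≤ r ^ 2 := by
    rw [← normSq_add_mul_I, ← Complex.sq_norm, re_add_im]
    gcongr
  rcases le_total 0 z.im with him | him
  · refine le_max_of_le_left ?_
    rw [← sq_le_sq₀ (norm_nonneg _) (norm_nonneg _)]
    simp only [Complex.sq_norm, normSq_apply, sub_re, sub_im, add_re, add_im, mul_re, mul_im,
      ofReal_re, ofReal_im, I_re, I_im]
    nlinarith [mul_nonneg hz hw, mul_nonneg him (show 0 ≤ w.im + r by nlinarith)]
  · refine le_max_of_le_right ?_
    rw [← sq_le_sq₀ (norm_nonneg _) (norm_nonneg _)]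
    simp only [Complex.sq_norm, normSq_apply, sub_re, sub_im, mul_re, mul_im,
      ofReal_re, ofReal_im, I_re, I_im]
    nlinarith [mul_nonneg hz hw, mul_nonneg (neg_nonneg.2 him) (show 0 ≤ r - w.im by nlinarith)]

end Complex

open Complex in
/-- Lemma 1: worst-case apparent power deviation over a half-disk. -/
theorem stmt_0 (a b r : ℝ) (hr : 0 < r) :
    IsGreatest
      {v : ℝ | ∃ p q : ℝ, 0 ≤ p ∧ ‖(p : ℂ) + (q : ℂ) * Complex.I‖ ≤ r ∧
        v = ‖((a : ℂ) + (b : ℂ) * Complex.I) - ((p : ℂ) + (q : ℂ) * Complex.I)‖}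
      (max (‖(a : ℂ) + ((b + r : ℝ) : ℂ) * Complex.I‖)
        (max (‖(a : ℂ) + ((b - r : ℝ) : ℂ) * Complex.I‖)
          (‖(a : ℂ) + (b : ℂ) * Complex.I -
            (r : ℂ) * Complex.exp
              (((if a ≠ 0 ∨ b ≠ 0 then Real.arctan (b / a) else 0 : ℝ) : ℂ) * Complex.I)‖))) := by
  set z : ℂ := a + b * I
  set θ : ℝ := if a ≠ 0 ∨ b ≠ 0 then Real.arctan (b / a) else 0 with hθ
  have hz : z.re = a ∧ z.im = b := by simp [z]
  have hplus : (a : ℂ) + ((b + r : ℝ) : ℂ) * I = z + r * I := by push_cast; ring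
  have hminus : (a : ℂ) + ((b - r : ℝ) : ℂ) * I = z - r * I := by push_cast; ring
  have hmem : ∀ w : ℂ, 0 ≤ w.re → ‖w‖ ≤ r → ∃ p q : ℝ, 0 ≤ p ∧ ‖(p : ℂ) + q * I‖ ≤ r ∧
      ‖z - w‖ = ‖z - (p + q * I)‖ :=
    fun w hre hnorm => ⟨w.re, w.im, hre, by rwa [re_add_im], by rw [re_add_im]⟩
  rw [hplus, hminus]
  refine ⟨max_rec' _ ?_ (max_rec' _ ?_ ?_), ?_⟩
  · simpa using hmem (-(r * I)) (by simp) (by simp [abs_of_pos hr])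
  · simpa using hmem (r * I) (by simp) (by simp [abs_of_pos hr])
  · have hcos : 0 ≤ Real.cos θ := by rw [hθ]; split_ifs <;> simp [(Real.cos_arctan_pos _).le]
    refine hmem _ (by simpa [exp_ofReal_mul_I_re] using mul_nonneg hr.le hcos) ?_
    rw [norm_mul, norm_real, norm_exp_ofReal_mul_I, mul_one, norm_of_nonneg hr.le]
  · rintro _ ⟨p, q, hp, hpq, rfl⟩
    rcases lt_or_ge a 0 with ha | ha
    · have hθ' : θ = Real.arctan (z.im / z.re) := by
        rw [hθ, if_pos (Or.inl ha.ne), hz.1, hz.2]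
      rw [hθ']
      exact (norm_sub_le_norm_sub_mul_exp_arctan_mul_I (hz.1 ▸ ha) hpq).trans
        (le_max_of_le_right (le_max_right _ _))
    · exact (norm_sub_le_max_of_re_nonneg (hz.1 ▸ ha) (by simpa using hp) hpq).trans
        (max_le_max le_rfl (le_max_left _ _))
end

section
/- Lemma 2 (optimal aggregated apparent power): Fix a tree with descendant matrix D, bus n, failure set I ⊆ N, loads p̂^L, q̂^L ∈ ℝ^N, nominal generations p̂^G, q̂^G ∈ ℝ^N, capacities C ∈ ℝ^N with C ≥ 0. Then max over (p^G, q^G) satisfying p^G_m ≥ 0, |p^G_m + i q^G_m| ≤ C_m for m ∈ I and p^G_m = p̂^G_m, q^G_m = q̂^G_m for m ∉ I, of |Σ_{m ∈ d(n)} ((p^G_m − p̂^L_m) + i (q^G_m − q̂^L_m))| equals max{ |a + i(b+r)|, |a + i(b−r)|, |a + ib − r e^{iθ}| }, where a = Σ_{m ∈ d(n)} p̂^L_m − Σ_{m ∈ d(n)∖I} p̂^G_m, b = Σ_{m ∈ d(n)} q̂^L_m − Σ_{m ∈ d(n)∖I} q̂^G_m, r = Σ_{m ∈ d(n)∩I}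 C_m, and θ = arctan(b/a) if (a,b) ≠ (0,0), else θ = 0. -/
/-! The failed inverters contribute `w = ∑_{m ∈ d(n) ∩ I} s_m` with each `s_m` in the right
half-disk of radius `C_m`; the Minkowski sum of these half-disks is the half-disk of radius
`r` (split a point proportionally to the radii). The objective is then `‖c - w‖` with
`c = a + b i`, to be maximised over that half-disk. If `a < 0`, the point
`r e^{iθ} = -r c / ‖c‖` attains the trivial bound `‖c‖ + r`. If `a ≥ 0`, then
`‖c - w‖² ≤ a² + (|b| + r)²`, attained at `w = ∓ r i`. -/

open Real Complex Finset
open scoped Pointwise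

def halfDisk (r : ℝ) : Set ℂ := {w | 0 ≤ w.re ∧ ‖w‖ ≤ r}

lemma zero_mem_halfDisk {r : ℝ} (hr : 0 ≤ r) : (0 : ℂ) ∈ halfDisk r :=
  ⟨le_rfl, by simpa using hr⟩

lemma eq_zero_of_mem_halfDisk_zero {w : ℂ} (hw : w ∈ halfDisk 0) : w = 0 :=
  norm_le_zero_iff.mp hw.2

lemma ofReal_mul_mem_halfDisk {t r : ℝ} {w : ℂ} (ht : 0 ≤ t) (hw : w ∈ halfDisk r) :
    (t : ℂ) * w ∈ halfDisk (t * r) := by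
  refine ⟨by simpa using mul_nonneg ht hw.1, ?_⟩
  rw [norm_mul, norm_real, norm_of_nonneg ht]
  exact mul_le_mul_of_nonneg_left hw.2 ht

lemma ofReal_mul_exp_mem_halfDisk {r θ : ℝ} (hr : 0 ≤ r) (hθ : 0 ≤ Real.cos θ) :
    (r : ℂ) * exp (θ * I) ∈ halfDisk r := by
  refine ⟨?_, ?_⟩
  · rw [re_ofReal_mul, exp_ofReal_mul_I_re]
    exact mul_nonneg hr hθ
  · rw [norm_mul, norm_exp_ofReal_mul_I, norm_real, norm_of_nonneg hr, mul_one]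

theorem finsetSum_halfDisk {ι : Type*} (s : Finset ι) {C : ι → ℝ}
    (hC : ∀ m ∈ s, 0 ≤ C m) :
    ∑ m ∈ s, halfDisk (C m) = halfDisk (∑ m ∈ s, C m) := by
  ext w
  rw [Set.mem_finsetSum]
  constructor
  · rintro ⟨z, hz, rfl⟩
    refine ⟨?_, ?_⟩
    · rw [re_sum]
      exact sum_nonneg fun m hm => (hz hm).1
    · exact (norm_sum_le _ _).trans (sum_le_sum fun m hm => (hz hm).2)
  · intro hw
    rcases (sum_nonneg hC).eq_or_lt with hr | hr
    · refine ⟨0, fun hm => zero_mem_halfDisk (hC _ hm), ?_⟩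
      rw [← hr] at hw
      simp [eq_zero_of_mem_halfDisk_zero hw]
    · refine ⟨fun m => ((C m / ∑ m ∈ s, C m : ℝ) : ℂ) * w, fun hm => ?_, ?_⟩
      · have := ofReal_mul_mem_halfDisk (div_nonneg (hC _ hm) hr.le) hw
        rwa [div_mul_cancel₀ _ hr.ne'] at this
      · rw [← sum_mul, ← ofReal_sum, ← sum_div, div_self hr.ne', ofReal_one, one_mul]

lemma norm_add_mul_I_ne_zero {a : ℝ} (b : ℝ) (ha : a ≠ 0) : ‖(a : ℂ) + b * I‖ ≠ 0 :=
  norm_ne_zero_iff.mpr fun h => ha (by simpa using congrArg re h)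

lemma exp_arctan_div_mul_I_of_neg {a : ℝ} (b : ℝ) (ha : a < 0) :
    exp (Real.arctan (b / a) * I) = -((a : ℂ) + b * I) / ‖(a : ℂ) + b * I‖ := by
  have hs : √(1 + (b / a) ^ 2) = ‖(a : ℂ) + b * I‖ / -a := by
    rw [norm_add_mul_I, eq_div_iff (neg_ne_zero.mpr ha.ne), ← sqrt_sq (neg_nonneg.mpr ha.le),
      ← sqrt_mul (by positivity)]
    congr 1
    field_simp [ha.ne]
  have hc := ofReal_ne_zero.mpr (norm_add_mul_I_ne_zero b ha.ne)
  have ha' : (a : ℂ) ≠ 0 := ofReal_ne_zero.mpr ha.ne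
  rw [exp_mul_I, ← ofReal_cos, ← ofReal_sin, cos_arctan, sin_arctan, hs]
  push_cast
  field_simp
  ring

lemma norm_sub_ofReal_mul_exp_arctan_of_neg {a r : ℝ} (b : ℝ) (ha : a < 0) (hr : 0 ≤ r) :
    ‖(a : ℂ) + b * I - r * exp (Real.arctan (b / a) * I)‖ = ‖(a : ℂ) + b * I‖ + r := by
  have hc := norm_add_mul_I_ne_zero b ha.ne
  set c : ℂ := a + b * I
  have : c - r * (-c / ‖c‖) = (((‖c‖ + r) / ‖c‖ : ℝ) : ℂ) * c := by
    have := ofReal_ne_zero.mpr hc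
    push_cast
    field_simp
    ring
  rw [exp_arctan_div_mul_I_of_neg b ha, this, norm_mul, norm_real,
    norm_of_nonneg (by positivity), div_mul_cancel₀ _ hc]

lemma norm_sub_le_max_of_mem_halfDisk {a : ℝ} (b : ℝ) {r : ℝ} (ha : 0 ≤ a) {w : ℂ}
    (hw : w ∈ halfDisk r) :
    ‖(a : ℂ) + b * I - w‖ ≤
      max ‖(a : ℂ) + ((b + r : ℝ) : ℂ) * I‖ ‖(a : ℂ) + ((b - r : ℝ) : ℂ) * I‖ := by
  obtain ⟨hre, hnorm⟩ := hw
  have hdisk : w.re ^ 2 + w.im ^ 2 ≤ r ^ 2 := by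
    rw [sq, sq, ← normSq_apply, ← Complex.sq_norm]
    exact pow_le_pow_left₀ (norm_nonneg w) hnorm 2
  have him := abs_le.mp ((abs_im_le_norm w).trans hnorm)
  have hsq : ‖(a : ℂ) + b * I - w‖ ^ 2 = (a - w.re) ^ 2 + (b - w.im) ^ 2 := by
    rw [Complex.sq_norm, normSq_apply]
    simp only [sub_re, add_re, sub_im, add_im, re_ofReal_mul, im_ofReal_mul, ofReal_re,
      ofReal_im, I_re, I_im]
    ring
  -- `‖c - w‖² = ‖c‖² + ‖w‖² - 2 a w.re - 2 b w.im ≤ a² + b² + r² + 2 |b| r`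
  rcases le_total 0 b with hb | hb
  · refine le_max_of_le_left ?_
    rw [← sq_le_sq₀ (norm_nonneg _) (norm_nonneg _), hsq, Complex.sq_norm, normSq_add_mul_I]
    nlinarith
  · refine le_max_of_le_right ?_
    rw [← sq_le_sq₀ (norm_nonneg _) (norm_nonneg _), hsq, Complex.sq_norm, normSq_add_mul_I]
    nlinarith

theorem isGreatest_image_norm_sub_halfDisk (a b : ℝ) {r : ℝ} (hr : 0 ≤ r) :
    IsGreatest ((fun w => ‖(a : ℂ) + b * I - w‖) '' halfDisk r)
      (max ‖(a : ℂ) + ((b + r : ℝ) : ℂ) * I‖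
        (max ‖(a : ℂ) + ((b - r : ℝ) : ℂ) * I‖
          ‖(a : ℂ) + b * I - r * exp (Real.arctan (b / a) * I)‖)) := by
  refine ⟨max_rec' _ ?_ (max_rec' _ ?_ ?_), ?_⟩
  · refine ⟨-r * I, ⟨by simp, by simp [abs_of_nonneg hr]⟩, ?_⟩
    dsimp only
    congr 1
    push_cast
    ring
  · refine ⟨r * I, ⟨by simp, by simp [abs_of_nonneg hr]⟩, ?_⟩
    dsimp only
    congr 1
    push_cast
    ring
  · exact ⟨_, ofReal_mul_exp_mem_halfDisk hr (cos_arctan_pos _).le, rfl⟩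
  · rintro _ ⟨w, hw, rfl⟩
    rcases lt_or_ge a 0 with ha | ha
    · refine le_max_of_le_right (le_max_of_le_right ?_)
      rw [norm_sub_ofReal_mul_exp_arctan_of_neg b ha hr]
      exact (norm_sub_le _ _).trans (add_le_add_right hw.2 _)
    · exact (norm_sub_le_max_of_mem_halfDisk b ha hw).trans
        (max_le_max le_rfl (le_max_left _ _))

lemma norm_sum_sub_eq_norm_sub_sum_inter {ι : Type*} [DecidableEq ι] (D F : Finset ι)
    {pL qL pG qG pg qg : ι → ℝ} (hfix : ∀ m ∉ F, pg m = pG m ∧ qg m = qG m) :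
    ‖∑ m ∈ D, (((pg m - pL m : ℝ) : ℂ) + ((qg m - qL m : ℝ) : ℂ) * I)‖ =
      ‖∑ m ∈ D, ((pL m : ℂ) + qL m * I) - ∑ m ∈ D \ F, ((pG m : ℂ) + qG m * I) -
        ∑ m ∈ D ∩ F, ((pg m : ℂ) + qg m * I)‖ := by
  have hfixed : ∑ m ∈ D \ F, ((pg m : ℂ) + qg m * I) = ∑ m ∈ D \ F, ((pG m : ℂ) + qG m * I) :=
    sum_congr rfl fun m hm => by
      obtain ⟨hp, hq⟩ := hfix m (mem_sdiff.mp hm).2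
      rw [hp, hq]
  rw [← norm_neg, ← hfixed, sub_sub, add_comm (∑ m ∈ D \ F, _), sum_inter_add_sum_sdiff]
  congr 1
  push_cast
  simp only [sum_add_distrib, sum_sub_distrib, ← sum_mul]
  ring

theorem setOf_norm_sum_eq_image_halfDisk {ι : Type*} [DecidableEq ι] (D F : Finset ι)
    (pL qL pG qG C : ι → ℝ) (hC : ∀ m ∈ F, 0 ≤ C m) :
    {v : ℝ | ∃ pg qg : ι → ℝ,
        (∀ m ∈ F, 0 ≤ pg m ∧ ‖(pg m : ℂ) + (qg m : ℂ) * I‖ ≤ C m) ∧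
        (∀ m ∉ F, pg m = pG m ∧ qg m = qG m) ∧
        v = ‖∑ m ∈ D, (((pg m - pL m : ℝ) : ℂ) + ((qg m - qL m : ℝ) : ℂ) * I)‖} =
      (fun w => ‖∑ m ∈ D, ((pL m : ℂ) + qL m * I) -
          ∑ m ∈ D \ F, ((pG m : ℂ) + qG m * I) - w‖) '' halfDisk (∑ m ∈ D ∩ F, C m) := by
  ext v
  simp only [Set.mem_ofPred_eq, Set.mem_image,
    ← finsetSum_halfDisk _ fun m hm => hC m (mem_inter.mp hm).2, Set.mem_finsetSum]
  constructor
  · rintro ⟨pg, qg, hF, hfix, rfl⟩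
    refine ⟨_, ⟨fun m => pg m + qg m * I, fun hm => ?_, rfl⟩,
      (norm_sum_sub_eq_norm_sub_sum_inter D F hfix).symm⟩
    obtain ⟨hre, hnorm⟩ := hF _ (mem_inter.mp hm).2
    exact ⟨by simpa using hre, hnorm⟩
  · rintro ⟨_, ⟨z, hz, rfl⟩, rfl⟩
    set u : ι → ℂ := fun m =>
      if m ∈ F then (if m ∈ D then z m else 0) else pG m + qG m * I
    have hfix : ∀ m ∉ F, (u m).re = pG m ∧ (u m).im = qG m := fun m hm => by simp [u, hm]
    refine ⟨fun m => (u m).re, fun m => (u m).im, fun m hm => ?_, hfix, ?_⟩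
    · by_cases hD : m ∈ D
      · simpa [u, hm, hD, halfDisk] using hz (mem_inter.mpr ⟨hD, hm⟩)
      · simp [u, hm, hD, hC m hm]
    · rw [norm_sum_sub_eq_norm_sub_sum_inter D F hfix]
      congr 2
      refine sum_congr rfl fun m hm => ?_
      obtain ⟨hD, hF⟩ := mem_inter.mp hm
      simp [u, hD, hF]

/-- Lemma 2: optimal aggregated apparent power under update failures on `I`. -/
theorem stmt_12 (N : ℕ) (dn I : Finset (Fin N))
    (pL qL pG qG C : Fin N → ℝ) (hC : ∀ m, 0 ≤ C m)
    (a b r θ : ℝ)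
    (ha : a = ∑ m ∈ dn, pL m - ∑ m ∈ dn \ I, pG m)
    (hb : b = ∑ m ∈ dn, qL m - ∑ m ∈ dn \ I, qG m)
    (hr : r = ∑ m ∈ dn ∩ I, C m)
    (hθ : θ = if a ≠ 0 ∨ b ≠ 0 then Real.arctan (b / a) else 0) :
    IsGreatest
      {v : ℝ | ∃ pg qg : Fin N → ℝ,
        (∀ m ∈ I, 0 ≤ pg m ∧ ‖(pg m : ℂ) + (qg m : ℂ) * Complex.I‖ ≤ C m) ∧
        (∀ m ∉ I, pg m = pG m ∧ qg m = qG m) ∧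
        v = ‖∑ m ∈ dn,
              (((pg m - pL m : ℝ) : ℂ) + ((qg m - qL m : ℝ) : ℂ) * Complex.I)‖}
      (max ‖(a : ℂ) + ((b + r : ℝ) : ℂ) * Complex.I‖
        (max ‖(a : ℂ) + ((b - r : ℝ) : ℂ) * Complex.I‖
          ‖(a : ℂ) + (b : ℂ) * Complex.I -
            (r : ℂ) * Complex.exp ((θ : ℂ) * Complex.I)‖)) := by
  have hc : (a : ℂ) + b * Complex.I = ∑ m ∈ dn, ((pL m : ℂ) + qL m * Complex.I) -
      ∑ m ∈ dn \ I, ((pG m : ℂ) + qG m * Complex.I) := by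
    rw [ha, hb]
    push_cast
    simp only [sum_add_distrib, ← sum_mul]
    ring
  -- `arctan (0 / 0) = 0`, so the case split in `θ` is vacuous
  have hθ' : θ = Real.arctan (b / a) := by
    rw [hθ]
    split_ifs with h
    · rfl
    · obtain ⟨rfl, rfl⟩ : a = 0 ∧ b = 0 := by simpa [not_or] using h
      simp
  rw [setOf_norm_sum_eq_image_halfDisk dn I pL qL pG qG C fun m _ => hC m, ← hc, ← hr,
    hθ']
  exact isGreatest_image_norm_sub_halfDisk a b (hr ▸ sum_nonneg fun m _ => hC m)
end
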